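/- Let 1/4 < H < 1 and let ρ be a real number satisfying: ρ < 4H-3 if 1/4 < H < 1/2, and ρ < 2(H-1) if 1/2 ≤ H < 1. Then the double series ∑_{k ∈ ℤ²₀} |k|^{2ρ+2} ∑_{h ∈ ℤ²₀, h ≠ k} 1/(|h|^{4H} |k-h|^{4H}) converges (is finite). -/

import Mathlib

/-- Euclidean norm of an element of `ℤ²`. -/
noncomputable def znorm (k : ℤ × ℤ) : ℝ :=
  Real.sqrt ((k.1 : ℝ) ^ 2 + (k.2 : ℝ) ^ 2)

/-!
Write `α = 4H` and `β = 2ρ + 2`; the hypotheses say exactly that `β + 2 < α` and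
`β + 2 < 2α - 2`. Since `|k| ≤ |h| + |k - h|`, the larger of `|h|, |k - h|` is at least `|k| / 2`,
so moving an exponent `c ∈ [0, α]` from the larger factor to the smaller one gives
`|h|^(-α) |k - h|^(-α) ≤ (|k| / 2)^(-c) (|h|^(c - 2α) + |k - h|^(c - 2α))`.
The double series is then at most `2^(c+1) ∑ |k|^(β - c) ∑ |h|^(c - 2α)`, and both lattice sums
converge once `β + 2 < c < 2α - 2`, because `∑_{k ∈ ℤ²₀} |k|^s < ∞` for `s < -2`.
-/

open Real

lemma znorm_nonneg (k : ℤ × ℤ) : 0 ≤ znorm k := sqrt_nonneg _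

lemma znorm_eq_norm (k : ℤ × ℤ) : znorm k = ‖((k.1 : ℝ) + (k.2 : ℝ) * Complex.I : ℂ)‖ := by
  rw [Complex.norm_def, Complex.normSq_add_mul_I, znorm]

lemma znorm_le_add_sub (k h : ℤ × ℤ) : znorm k ≤ znorm h + znorm (k - h) := by
  simp only [znorm_eq_norm, Prod.fst_sub, Prod.snd_sub, Int.cast_sub]
  calc _ = ‖((h.1 : ℝ) + (h.2 : ℝ) * Complex.I : ℂ) +
        (((k.1 : ℝ) - h.1 : ℝ) + ((k.2 : ℝ) - h.2 : ℝ) * Complex.I)‖ := by push_cast; ring_nf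
    _ ≤ _ := norm_add_le _ _

lemma norm_le_znorm (k : ℤ × ℤ) : ‖k‖ ≤ znorm k := by
  simp only [Prod.norm_def, Int.norm_eq_abs, znorm_eq_norm]
  exact max_le (by simpa using Complex.abs_re_le_norm ((k.1 : ℝ) + (k.2 : ℝ) * Complex.I))
    (by simpa using Complex.abs_im_le_norm ((k.1 : ℝ) + (k.2 : ℝ) * Complex.I))

lemma znorm_pos {k : ℤ × ℤ} (hk : k ≠ 0) : 0 < znorm k :=
  (norm_pos_iff.mpr hk).trans_le (norm_le_znorm k)

lemma summable_znorm_rpow {s : ℝ} (hs : s < -2) : Summable fun k : ℤ × ℤ ↦ znorm k ^ s := by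
  have hnorm : Summable fun k : ℤ × ℤ ↦ ‖k‖ ^ s := by
    refine (finTwoArrowEquiv ℤ).summable_iff.mp ?_
    convert EisensteinSeries.summable_one_div_norm_rpow (k := -s) (by linarith) using 2 with x
    simp [EisensteinSeries.norm_eq_max_natAbs, Prod.norm_def, Int.norm_eq_abs]
  refine hnorm.of_nonneg_of_le (fun k ↦ rpow_nonneg (znorm_nonneg k) s) fun k ↦ ?_
  rcases eq_or_ne k 0 with rfl | hk
  · simp [znorm, zero_rpow (by linarith : s ≠ 0)]
  · exact rpow_le_rpow_of_nonpos (norm_pos_iff.mpr hk) (norm_le_znorm k) (by linarith)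

lemma one_div_rpow_mul_rpow_le {A B K α c : ℝ} (hA : 0 < A) (hB : 0 < B) (hK : 0 < K)
    (hKAB : K ≤ A + B) (hc : 0 ≤ c) (hcα : c ≤ α) :
    1 / (A ^ α * B ^ α) ≤ (K / 2) ^ (-c) * (A ^ (c - 2 * α) + B ^ (c - 2 * α)) := by
  wlog hAB : A ≤ B generalizing A B
  · rw [mul_comm, add_comm]
    exact this hB hA (by linarith) (by linarith)
  have hB_split : B ^ (-α) ≤ (K / 2) ^ (-c) * A ^ (c - α) := by
    calc B ^ (-α) = B ^ (-c) * B ^ (c - α) := by rw [← rpow_add hB]; ring_nf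
      _ ≤ (K / 2) ^ (-c) * A ^ (c - α) := by
        gcongr ?_ * ?_
        · exact rpow_le_rpow_of_nonpos (by positivity) (by linarith) (by linarith)
        · exact rpow_le_rpow_of_nonpos hA hAB (by linarith)
  calc 1 / (A ^ α * B ^ α) = A ^ (-α) * B ^ (-α) := by
        rw [rpow_neg hA.le, rpow_neg hB.le, one_div, mul_inv]
    _ ≤ A ^ (-α) * ((K / 2) ^ (-c) * A ^ (c - α)) := by gcongr
    _ = (K / 2) ^ (-c) * A ^ (c - 2 * α) := by
        rw [mul_left_comm, ← rpow_add hA]; ring_nf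
    _ ≤ (K / 2) ^ (-c) * (A ^ (c - 2 * α) + B ^ (c - 2 * α)) := by
        gcongr; exact le_add_of_nonneg_right (by positivity)

lemma znorm_rpow_mul_one_div_le {β α c : ℝ} (hc : 0 ≤ c) (hcα : c ≤ α) {k h : ℤ × ℤ}
    (hk : k ≠ 0) (hh : h ≠ 0) (hhk : h ≠ k) :
    znorm k ^ β * (1 / (znorm h ^ α * znorm (k - h) ^ α)) ≤
      2 ^ c * znorm k ^ (β - c) * (znorm h ^ (c - 2 * α) + znorm (k - h) ^ (c - 2 * α)) := by
  have hK := znorm_pos hk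
  calc _ ≤ znorm k ^ β * ((znorm k / 2) ^ (-c) *
        (znorm h ^ (c - 2 * α) + znorm (k - h) ^ (c - 2 * α))) := by
        gcongr
        exact one_div_rpow_mul_rpow_le (znorm_pos hh) (znorm_pos (sub_ne_zero.mpr hhk.symm)) hK
          (znorm_le_add_sub k h) hc hcα
    _ = _ := by
        rw [div_rpow hK.le zero_le_two, rpow_neg hK.le, rpow_neg zero_le_two, rpow_sub hK]
        field_simp

lemma ENNReal.tsum_add_comp_sub_le {G : Type*} [AddGroup G] (s : Set G) (g : G → ENNReal)
    (k : G) : ∑' h : s, (g h + g (k - h)) ≤ 2 * ∑' h, g h := by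
  calc ∑' h : s, (g h + g (k - h)) ≤ ∑' h, (g h + g (k - h)) :=
        ENNReal.tsum_comp_le_tsum_of_injective Subtype.val_injective _
    _ = 2 * ∑' h, g h := by
        rw [ENNReal.tsum_add, two_mul]
        exact congrArg _ ((Equiv.subLeft k).tsum_eq g)

lemma ofReal_znorm_rpow_mul_tsum_le {β α c : ℝ} (hc : 0 ≤ c) (hcα : c ≤ α) {k : ℤ × ℤ}
    (hk : k ≠ 0) :
    ENNReal.ofReal (znorm k ^ β) *
        ∑' h : {h : ℤ × ℤ // h ≠ 0 ∧ h ≠ k},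
          ENNReal.ofReal (1 / (znorm h.1 ^ α * znorm (k - h.1) ^ α)) ≤
      ENNReal.ofReal (2 ^ c) * (2 * ∑' h, ENNReal.ofReal (znorm h ^ (c - 2 * α))) *
        ENNReal.ofReal (znorm k ^ (β - c)) := by
  have hnonneg (m : ℤ × ℤ) (s : ℝ) : 0 ≤ znorm m ^ s := rpow_nonneg (znorm_nonneg m) s
  rw [← ENNReal.tsum_mul_left]
  calc _ ≤ ∑' h : {h : ℤ × ℤ // h ≠ 0 ∧ h ≠ k}, ENNReal.ofReal (2 ^ c * znorm k ^ (β - c)) *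
        (ENNReal.ofReal (znorm h.1 ^ (c - 2 * α)) +
          ENNReal.ofReal (znorm (k - h.1) ^ (c - 2 * α))) := by
        refine ENNReal.tsum_le_tsum fun h ↦ ?_
        rw [← ENNReal.ofReal_mul (hnonneg k β), ← ENNReal.ofReal_add (hnonneg _ _) (hnonneg _ _),
          ← ENNReal.ofReal_mul (mul_nonneg (by positivity) (hnonneg k _))]
        exact ENNReal.ofReal_le_ofReal (znorm_rpow_mul_one_div_le hc hcα hk h.2.1 h.2.2)
    _ ≤ ENNReal.ofReal (2 ^ c * znorm k ^ (β - c)) *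
        (2 * ∑' h, ENNReal.ofReal (znorm h ^ (c - 2 * α))) := by
        rw [ENNReal.tsum_mul_left]
        gcongr
        exact ENNReal.tsum_add_comp_sub_le {h | h ≠ 0 ∧ h ≠ k} _ k
    _ = _ := by
        rw [ENNReal.ofReal_mul (by positivity)]
        ring

theorem statement_7 (H ρ : ℝ) (hH1 : 1 / 4 < H) (hH2 : H < 1)
    (hρ1 : 1 / 4 < H → H < 1 / 2 → ρ < 4 * H - 3)
    (hρ2 : 1 / 2 ≤ H → H < 1 → ρ < 2 * (H - 1)) :
    (∑' k : {k : ℤ × ℤ // k ≠ 0},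
      ENNReal.ofReal (znorm k.1 ^ (2 * ρ + 2)) *
        ∑' h : {h : ℤ × ℤ // h ≠ 0 ∧ h ≠ k.1},
          ENNReal.ofReal (1 / (znorm h.1 ^ (4 * H) * znorm (k.1 - h.1) ^ (4 * H)))) < ⊤ := by
  have hexp : 2 * ρ + 2 + 2 < 4 * H ∧ 2 * ρ + 2 + 2 < 2 * (4 * H) - 2 := by
    rcases lt_or_ge H (1 / 2) with hH | hH
    · have := hρ1 hH1 hH; constructor <;> linarith
    · have := hρ2 hH hH2; constructor <;> linarith
  obtain ⟨c, hc_lo, hc_hi⟩ := exists_between (max_lt (lt_min hexp.2 hexp.1)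
    (lt_min (by linarith : (0 : ℝ) < 2 * (4 * H) - 2) (by linarith : (0 : ℝ) < 4 * H)))
  rw [max_lt_iff] at hc_lo
  rw [lt_min_iff] at hc_hi
  set C := ENNReal.ofReal (2 ^ c) * (2 * ∑' h, ENNReal.ofReal (znorm h ^ (c - 2 * (4 * H))))
  have hC : C < ⊤ := ENNReal.mul_lt_top ENNReal.ofReal_lt_top
    (ENNReal.mul_lt_top (by simp) ((summable_znorm_rpow (by linarith)).tsum_ofReal_lt_top))
  calc _ ≤ ∑' k : {k : ℤ × ℤ // k ≠ 0}, C * ENNReal.ofReal (znorm k.1 ^ (2 * ρ + 2 - c)) :=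
        ENNReal.tsum_le_tsum fun k ↦
          ofReal_znorm_rpow_mul_tsum_le hc_lo.2.le hc_hi.2.le k.2
    _ ≤ C * ∑' k, ENNReal.ofReal (znorm k ^ (2 * ρ + 2 - c)) := by
        rw [ENNReal.tsum_mul_left]
        gcongr
        exact ENNReal.tsum_comp_le_tsum_of_injective Subtype.val_injective _
    _ < ⊤ := ENNReal.mul_lt_top hC ((summable_znorm_rpow (by linarith)).tsum_ofReal_lt_top)
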